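/- In the scalar Hegselmann–Krause model, every agent's state x_i(t) converges to a limit x_i* as t → ∞, and the limits satisfy: for each pair i, j, either x_i* = x_j* or |x_i* - x_j*| > ρ. -/

import Mathlib

/-!
Sort the agents by initial opinion; the update preserves this order. An agent that is eventually
more than `ρ` above every agent below it (the lowest agent of a cluster) only averages opinions at
least its own, so it is eventually nondecreasing; being bounded, it converges. Going up the sorted
list, an agent either at some time is more than `ρ` above its predecessor, and then this gap can
only widen, so the agent starts a new cluster and the two limits are more than `ρ` apart; or it
always stays within reach of its predecessor, and then averaging drags it to the limit of its
predecessor's cluster.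
-/

open Filter

open scoped Classical

/-- One step of the Hegselmann–Krause dynamics with confidence bound `ρ`:
each agent moves to the average of the opinions within distance `ρ`. -/
noncomputable def hkUpdate (n : ℕ) (ρ : ℝ) (x : Fin n → ℝ) : Fin n → ℝ := fun i =>
  (∑ j ∈ Finset.univ.filter (fun j => |x j - x i| ≤ ρ), x j) /
    ((Finset.univ.filter (fun j => |x j - x i| ≤ ρ)).card : ℝ)

open Finset
open scoped BigOperators

namespace Finset

variable {ι : Type*} {f : ι → ℝ}

theorem expect_le_expect_union [DecidableEq ι] {A B : Finset ι} (hA : A.Nonempty)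
    (hAB : Disjoint A B) (h : ∀ a ∈ A, ∀ b ∈ B, f a ≤ f b) :
    𝔼 a ∈ A, f a ≤ 𝔼 c ∈ A ∪ B, f c := by
  set μ := 𝔼 a ∈ A, f a
  have hB : ∀ b ∈ B, μ ≤ f b := fun b hb => expect_le hA fun a ha => h a ha b hb
  have hAB_pos : (0 : ℝ) < #(A ∪ B) := by exact_mod_cast hA.mono subset_union_left |>.card_pos
  rw [expect_eq_sum_div_card, le_div_iff₀ hAB_pos, sum_union hAB, card_union_of_disjoint hAB,
    ← card_mul_expect A f, Nat.cast_add]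
  have := card_nsmul_le_sum B f μ hB
  rw [nsmul_eq_mul] at this
  linarith

theorem expect_union_le_expect [DecidableEq ι] {A B : Finset ι} (hB : B.Nonempty)
    (hAB : Disjoint A B) (h : ∀ a ∈ A, ∀ b ∈ B, f a ≤ f b) :
    𝔼 c ∈ A ∪ B, f c ≤ 𝔼 b ∈ B, f b := by
  have := expect_le_expect_union (f := fun i => -f i) hB hAB.symm
    fun b hb a ha => neg_le_neg (h a ha b hb)
  simpa only [expect_neg_distrib, neg_le_neg_iff, union_comm] using this

theorem expect_le_expect_of_sdiff [DecidableEq ι] {S T : Finset ι} (hS : S.Nonempty)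
    (hT : T.Nonempty) (hST : ∀ a ∈ S \ T, ∀ b ∈ T, f a ≤ f b)
    (hTS : ∀ a ∈ S, ∀ b ∈ T \ S, f a ≤ f b) :
    𝔼 a ∈ S, f a ≤ 𝔼 b ∈ T, f b :=
  calc 𝔼 a ∈ S, f a ≤ 𝔼 c ∈ S ∪ T \ S, f c := expect_le_expect_union hS disjoint_sdiff hTS
    _ = 𝔼 c ∈ S \ T ∪ T, f c := by rw [union_sdiff_self_eq_union, sdiff_union_self_eq_union]
    _ ≤ 𝔼 b ∈ T, f b := expect_union_le_expect hT sdiff_disjoint hST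

end Finset

theorem exists_tendsto_of_eventually_le_succ {u : ℕ → ℝ} {M : ℝ}
    (hu : ∀ᶠ t in atTop, u t ≤ u (t + 1)) (hM : ∀ t, u t ≤ M) :
    ∃ L, Tendsto u atTop (nhds L) := by
  obtain ⟨T, hT⟩ := eventually_atTop.1 hu
  have hmono : Monotone fun s => u (s + T) :=
    monotone_nat_of_le_succ fun s => by simpa only [add_right_comm] using hT (s + T) (by omega)
  exact ⟨_, (tendsto_add_atTop_iff_nat T).1
    (tendsto_atTop_ciSup hmono ⟨M, by rintro _ ⟨s, rfl⟩; exact hM _⟩)⟩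

theorem Monotone.eq_or_lt_sub_of_succ {n : ℕ} {ρ : ℝ} {L : Fin (n + 1) → ℝ} (hL : Monotone L)
    (h : ∀ i : Fin n, L i.castSucc = L i.succ ∨ ρ < L i.succ - L i.castSucc)
    {a b : Fin (n + 1)} (hab : a ≤ b) : L a = L b ∨ ρ < L b - L a := by
  induction b using Fin.induction generalizing a with
  | zero => rw [Fin.le_zero_iff.1 hab]; exact .inl rfl
  | succ i ih =>
    rcases hab.eq_or_lt with rfl | hlt
    · exact .inl rfl
    have ha := Fin.le_castSucc_iff.2 hlt
    have h₁ := hL ha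
    have h₂ := hL (Fin.castSucc_lt_succ (i := i)).le
    rcases ih ha with h₃ | h₃ <;> rcases h i with h₄ | h₄
    · exact .inl (h₃.trans h₄)
    all_goals exact .inr (by linarith)

namespace HegselmannKrause

variable {n : ℕ} {ρ : ℝ}

noncomputable def neighbors (ρ : ℝ) (z : Fin n → ℝ) (i : Fin n) : Finset (Fin n) :=
  univ.filter fun j => |z j - z i| ≤ ρ

theorem mem_neighbors {z : Fin n → ℝ} {i j : Fin n} : j ∈ neighbors ρ z i ↔ |z j - z i| ≤ ρ := by
  simp [neighbors]

theorem hkUpdate_eq_expect (z : Fin n → ℝ) (i : Fin n) :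
    hkUpdate n ρ z i = 𝔼 j ∈ neighbors ρ z i, z j :=
  (expect_eq_sum_div_card _ _).symm

theorem neighbors_nonempty (hρ : 0 ≤ ρ) (z : Fin n → ℝ) (i : Fin n) :
    (neighbors ρ z i).Nonempty :=
  ⟨i, mem_neighbors.2 (by simpa using hρ)⟩

theorem hkUpdate_comp_perm (z : Fin n → ℝ) (σ : Equiv.Perm (Fin n)) :
    hkUpdate n ρ (z ∘ σ) = hkUpdate n ρ z ∘ σ := by
  funext i
  simp only [hkUpdate_eq_expect, Function.comp_apply]
  exact expect_equiv σ (fun j => by simp [mem_neighbors]) fun _ _ => rfl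

theorem hkUpdate_le_hkUpdate (hρ : 0 ≤ ρ) {z : Fin n → ℝ} {i i' : Fin n} (h : z i ≤ z i') :
    hkUpdate n ρ z i ≤ hkUpdate n ρ z i' := by
  simp only [hkUpdate_eq_expect]
  refine expect_le_expect_of_sdiff (neighbors_nonempty hρ z i) (neighbors_nonempty hρ z i')
    (fun a ha b hb => ?_) (fun a ha b hb => ?_)
  all_goals
    simp only [Finset.mem_sdiff, mem_neighbors, abs_le, not_and_or, not_le] at ha hb
    grind

theorem hkUpdate_le_self (hρ : 0 ≤ ρ) {z : Fin n → ℝ} (hz : Monotone z) {i : Fin n}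
    (h : ∀ j, i < j → ρ < z j - z i) : hkUpdate n ρ z i ≤ z i := by
  rw [hkUpdate_eq_expect]
  refine expect_le (neighbors_nonempty hρ z i) fun j hj => ?_
  rcases le_or_gt j i with hji | hij
  · exact hz hji
  · linarith [h j hij, (abs_le.1 (mem_neighbors.1 hj)).2]

theorem le_hkUpdate_self (hρ : 0 ≤ ρ) {z : Fin n → ℝ} (hz : Monotone z) {i : Fin n}
    (h : ∀ j < i, ρ < z i - z j) : z i ≤ hkUpdate n ρ z i := by
  rw [hkUpdate_eq_expect]
  refine le_expect (neighbors_nonempty hρ z i) fun j hj => ?_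
  rcases le_or_gt i j with hij | hji
  · exact hz hij
  · linarith [h j hji, (abs_le.1 (mem_neighbors.1 hj)).1]

theorem sub_le_mul_hkUpdate_sub {z : Fin n → ℝ} {i j : Fin n} {b : ℝ}
    (hj : j ∈ neighbors ρ z i) (hb : ∀ a ∈ neighbors ρ z i, b ≤ z a) :
    z j - b ≤ n * (hkUpdate n ρ z i - b) := by
  rw [hkUpdate_eq_expect]
  have hcard : (#(neighbors ρ z i) : ℝ) ≤ n := by exact_mod_cast (card_le_univ _).trans_eq (by simp)
  calc z j - b ≤ ∑ a ∈ neighbors ρ z i, (z a - b) :=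
        single_le_sum (fun a ha => sub_nonneg.2 (hb a ha)) hj
    _ = #(neighbors ρ z i) * (𝔼 a ∈ neighbors ρ z i, z a - b) := by
        rw [mul_sub, card_mul_expect, sum_sub_distrib, sum_const, nsmul_eq_mul]
    _ ≤ n * (𝔼 a ∈ neighbors ρ z i, z a - b) :=
        mul_le_mul_of_nonneg_right hcard (sub_nonneg.2 (le_expect ⟨j, hj⟩ hb))

theorem trajectory_le (hρ : 0 ≤ ρ) {x : ℕ → Fin n → ℝ}
    (hx : ∀ t, x (t + 1) = hkUpdate n ρ (x t)) {M : ℝ} (h0 : ∀ j, x 0 j ≤ M) :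
    ∀ t j, x t j ≤ M
  | 0 => h0
  | t + 1 => fun j => by
    rw [hx, hkUpdate_eq_expect]
    exact expect_le (neighbors_nonempty hρ _ _) fun a _ => trajectory_le hρ hx h0 t a

structure IsSortedTrajectory (ρ : ℝ) (y : ℕ → Fin n → ℝ) : Prop where
  step : ∀ t, y (t + 1) = hkUpdate n ρ (y t)
  sorted : ∀ t, Monotone (y t)

theorem isSortedTrajectory_of_monotone (hρ : 0 ≤ ρ) {y : ℕ → Fin n → ℝ}
    (hy : ∀ t, y (t + 1) = hkUpdate n ρ (y t)) (h0 : Monotone (y 0)) :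
    IsSortedTrajectory ρ y where
  step := hy
  sorted t := by
    induction t with
    | zero => exact h0
    | succ t ih => rw [hy]; exact fun i i' h => hkUpdate_le_hkUpdate hρ (ih h)

def SeparatedBelow (ρ : ℝ) (y : ℕ → Fin n → ℝ) (m : Fin n) : Prop :=
  ∀ᶠ t in atTop, ∀ a < m, ρ < y t m - y t a

namespace IsSortedTrajectory

variable {y : ℕ → Fin (n + 1) → ℝ}

theorem exists_tendsto_of_separatedBelow (hρ : 0 ≤ ρ) (hy : IsSortedTrajectory ρ y)
    {m : Fin (n + 1)} (hm : SeparatedBelow ρ y m) : ∃ L, Tendsto (y · m) atTop (nhds L) :=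
  exists_tendsto_of_eventually_le_succ
    (hm.mono fun t ht => by rw [hy.step]; exact le_hkUpdate_self hρ (hy.sorted t) ht)
    fun t => trajectory_le hρ hy.step (fun j => hy.sorted 0 (Fin.le_last j)) t m

theorem gap_persists (hρ : 0 ≤ ρ) (hy : IsSortedTrajectory ρ y) {i : Fin n} {t₀ : ℕ}
    (hgap : ρ < y t₀ i.succ - y t₀ i.castSucc) :
    ∀ t ≥ t₀, y t i.castSucc ≤ y t₀ i.castSucc ∧ y t₀ i.succ ≤ y t i.succ := by
  intro t ht
  induction t, ht using Nat.le_induction with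
  | base => exact ⟨le_rfl, le_rfl⟩
  | succ t _ ih =>
    rw [hy.step]
    refine ⟨(hkUpdate_le_self hρ (hy.sorted t) fun j hj => ?_).trans ih.1,
      ih.2.trans (le_hkUpdate_self hρ (hy.sorted t) fun j hj => ?_)⟩
    · linarith [hy.sorted t (Fin.castSucc_lt_iff_succ_le.1 hj)]
    · linarith [hy.sorted t (Fin.le_castSucc_iff.2 hj)]

theorem separatedBelow_succ (hρ : 0 ≤ ρ) (hy : IsSortedTrajectory ρ y) {i : Fin n} {t₀ : ℕ}
    (hgap : ρ < y t₀ i.succ - y t₀ i.castSucc) : SeparatedBelow ρ y i.succ :=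
  eventually_atTop.2 ⟨t₀, fun t ht a ha => by
    obtain ⟨h₁, h₂⟩ := hy.gap_persists hρ hgap t ht
    linarith [hy.sorted t (Fin.le_castSucc_iff.2 ha)]⟩

/-- Eventually all neighbours of `k` lie above `m`, so `sub_le_mul_hkUpdate_sub` squeezes `y t j`
between `y t k` and `y t m + (n + 1) * (y (t + 1) k - y t m)`, both of which tend to `L`. -/
theorem tendsto_of_forall_sub_le (hρ : 0 ≤ ρ) (hy : IsSortedTrajectory ρ y)
    {m k j : Fin (n + 1)} {L : ℝ} (hmk : m ≤ k) (hkj : k ≤ j) (hm : SeparatedBelow ρ y m)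
    (hmL : Tendsto (y · m) atTop (nhds L)) (hkL : Tendsto (y · k) atTop (nhds L))
    (hnear : ∀ t, y t j - y t k ≤ ρ) : Tendsto (y · j) atTop (nhds L) := by
  have hupper : Tendsto (fun t => y t m + (n + 1 : ℕ) * (y (t + 1) k - y t m)) atTop
      (nhds (L + (n + 1 : ℕ) * (L - L))) :=
    hmL.add (tendsto_const_nhds.mul (((tendsto_add_atTop_iff_nat 1).2 hkL).sub hmL))
  rw [sub_self, mul_zero, add_zero] at hupper
  refine tendsto_of_tendsto_of_tendsto_of_le_of_le' hkL hupper
    (.of_forall fun t => hy.sorted t hkj) (hm.mono fun t ht => ?_)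
  have hlow : ∀ a ∈ neighbors ρ (y t) k, y t m ≤ y t a := by
    intro a ha
    by_contra! hlt
    linarith [ht a ((hy.sorted t).reflect_lt hlt), hy.sorted t hmk,
      (abs_le.1 (mem_neighbors.1 ha)).1]
  have hj : j ∈ neighbors ρ (y t) k :=
    mem_neighbors.2 (abs_le.2 ⟨by linarith [hy.sorted t hkj], hnear t⟩)
  have := sub_le_mul_hkUpdate_sub hj hlow
  rw [← hy.step] at this
  linarith

theorem exists_separatedBelow_same_limit (hρ : 0 ≤ ρ) (hy : IsSortedTrajectory ρ y)
    (k : Fin (n + 1)) : ∃ m ≤ k, SeparatedBelow ρ y m ∧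
      ∃ L, Tendsto (y · m) atTop (nhds L) ∧ Tendsto (y · k) atTop (nhds L) := by
  induction k using Fin.induction with
  | zero =>
    have h0 : SeparatedBelow ρ y 0 := .of_forall fun _ a ha => absurd ha (Fin.not_lt_zero a)
    obtain ⟨L, hL⟩ := hy.exists_tendsto_of_separatedBelow hρ h0
    exact ⟨0, le_rfl, h0, L, hL, hL⟩
  | succ i ih =>
    by_cases hgap : ∃ t₀, ρ < y t₀ i.succ - y t₀ i.castSucc
    · obtain ⟨t₀, ht₀⟩ := hgap
      have hsep := hy.separatedBelow_succ hρ ht₀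
      obtain ⟨L, hL⟩ := hy.exists_tendsto_of_separatedBelow hρ hsep
      exact ⟨i.succ, le_rfl, hsep, L, hL, hL⟩
    · simp only [not_exists, not_lt] at hgap
      obtain ⟨m, hmi, hm, L, hmL, hiL⟩ := ih
      exact ⟨m, hmi.trans Fin.castSucc_lt_succ.le, hm, L, hmL,
        hy.tendsto_of_forall_sub_le hρ hmi Fin.castSucc_lt_succ.le hm hmL hiL hgap⟩

theorem limit_eq_or_gap (hρ : 0 ≤ ρ) (hy : IsSortedTrajectory ρ y) {L : Fin (n + 1) → ℝ}
    (hL : ∀ k, Tendsto (y · k) atTop (nhds (L k))) (i : Fin n) :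
    L i.castSucc = L i.succ ∨ ρ < L i.succ - L i.castSucc := by
  by_cases hgap : ∃ t₀, ρ < y t₀ i.succ - y t₀ i.castSucc
  · obtain ⟨t₀, ht₀⟩ := hgap
    have hpersist := eventually_atTop.2 ⟨t₀, hy.gap_persists hρ ht₀⟩
    have h₁ : L i.castSucc ≤ y t₀ i.castSucc :=
      le_of_tendsto (hL _) (hpersist.mono fun _ => And.left)
    have h₂ : y t₀ i.succ ≤ L i.succ := ge_of_tendsto (hL _) (hpersist.mono fun _ => And.right)
    exact .inr (by linarith)
  · simp only [not_exists, not_lt] at hgap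
    obtain ⟨m, hmi, hm, L', hmL, hiL⟩ := hy.exists_separatedBelow_same_limit hρ i.castSucc
    left
    rw [tendsto_nhds_unique (hL _) hiL, tendsto_nhds_unique (hL _)
      (hy.tendsto_of_forall_sub_le hρ hmi Fin.castSucc_lt_succ.le hm hmL hiL hgap)]

end IsSortedTrajectory

theorem IsSortedTrajectory.exists_limits (hρ : 0 ≤ ρ) {y : ℕ → Fin (n + 1) → ℝ}
    (hy : IsSortedTrajectory ρ y) : ∃ L : Fin (n + 1) → ℝ,
      (∀ k, Tendsto (y · k) atTop (nhds (L k))) ∧ ∀ a b, L a = L b ∨ ρ < |L a - L b| := by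
  have hconv (k : Fin (n + 1)) : ∃ L, Tendsto (y · k) atTop (nhds L) :=
    let ⟨_, _, _, L, _, hL⟩ := hy.exists_separatedBelow_same_limit hρ k
    ⟨L, hL⟩
  choose L hL using hconv
  have hmono : Monotone L := fun a b hab =>
    le_of_tendsto_of_tendsto' (hL a) (hL b) fun t => hy.sorted t hab
  have hadj := hy.limit_eq_or_gap hρ hL
  refine ⟨L, hL, fun a b => ?_⟩
  rcases le_total a b with hab | hba
  · rw [abs_sub_comm]
    exact (hmono.eq_or_lt_sub_of_succ hadj hab).imp id fun h => h.trans_le (le_abs_self _)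
  · exact (hmono.eq_or_lt_sub_of_succ hadj hba).imp Eq.symm fun h => h.trans_le (le_abs_self _)

end HegselmannKrause

open HegselmannKrause

/-- Every agent's opinion in the HK model converges, and any two limits are either
equal or more than ρ apart. -/
theorem hk_convergence (n : ℕ) (ρ : ℝ) (hρ : 0 < ρ)
    (x : ℕ → Fin n → ℝ) (hx : ∀ t, x (t + 1) = hkUpdate n ρ (x t)) :
    ∃ xstar : Fin n → ℝ,
      (∀ i, Tendsto (fun t => x t i) atTop (nhds (xstar i))) ∧
      (∀ i j, xstar i = xstar j ∨ ρ < |xstar i - xstar j|) := by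
  cases n with
  | zero => exact ⟨finZeroElim, finZeroElim, finZeroElim⟩
  | succ n =>
    set σ := Tuple.sort (x 0)
    have hy : IsSortedTrajectory ρ fun t => x t ∘ σ :=
      isSortedTrajectory_of_monotone hρ.le (fun t => by rw [hx, hkUpdate_comp_perm])
        (Tuple.monotone_sort (x 0))
    obtain ⟨L, hL, hgap⟩ := hy.exists_limits hρ.le
    exact ⟨fun i => L (σ.symm i), fun i => by simpa using hL (σ.symm i), fun i j => hgap _ _⟩
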